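/- Chebyshev's inequality for conditional expectations on Riesz spaces: if E is a Dedekind complete Riesz space with weak order unit e, F a conditional expectation on E with F(e)=e, X ∈ E, and λ > 0, then λ · F(P_{(|X| ≥ λe)} e) ≤ F(|X|), where P_{(|X| ≥ λe)} denotes the band projection onto the band generated by (|X| − λe)^+. -/
import Mathlib


variable {E : Type*} [AddCommGroup E] [Lattice E]
  [CovariantClass E E (· + ·) (· ≤ ·)] [Module ℝ E]

/-- `E` is Dedekind complete. -/
def DedekindComplete (E : Type*) [AddCommGroup E] [Lattice E] : Prop :=
  ∀ A : Set E, A.Nonempty → BddAbove A → ∃ s, IsLUB A s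

/-- `e` is a weak order unit. -/
def IsWeakUnit (e : E) : Prop :=
  0 < e ∧ ∀ x : E, 0 ≤ x → IsLUB (Set.range fun n : ℕ => x ⊓ n • e) x

/-- A band (order) projection. -/
def IsBandProj (P : E →ₗ[ℝ] E) : Prop :=
  (∀ x, P (P x) = P x) ∧ ∀ x : E, 0 ≤ x → 0 ≤ P x ∧ P x ≤ x

/-- `P` is the band projection onto the band generated by `u ≥ 0`:
for `0 ≤ x`, `P x = sup_n (x ⊓ n • u)`. -/
def IsProjOnBandGen (P : E →ₗ[ℝ] E) (u : E) : Prop :=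
  IsBandProj P ∧ ∀ x : E, 0 ≤ x → IsLUB (Set.range fun n : ℕ => x ⊓ n • u) (P x)

/-- A conditional expectation with respect to the weak order unit `e`. -/
def IsCondExp (e : E) (F : E →ₗ[ℝ] E) : Prop :=
  (∀ x, F (F x) = F x) ∧ (∀ x : E, 0 < x → 0 < F x) ∧ F e = e ∧
  ∀ V : ℕ → E, Antitone V → IsGLB (Set.range V) 0 →
    IsGLB (Set.range fun n => F (V n)) 0

/-- Subadditivity of inf over addition for nonnegative elements. -/
lemma inf_add_le' {a b c : E} (ha : 0 ≤ a) (hb : 0 ≤ b) (hc : 0 ≤ c) :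
    a ⊓ (b + c) ≤ a ⊓ b + a ⊓ c := by
  have h1 : a ⊓ (b + c) - b ≤ a ⊓ c := by
    refine le_inf ?_ ?_
    · calc a ⊓ (b + c) - b ≤ a - 0 := sub_le_sub inf_le_left hb
      _ = a := sub_zero a
    · exact sub_le_iff_le_add.mpr (inf_le_right.trans (add_comm b c).le)
  have h2 : a ⊓ (b + c) - a ⊓ c ≤ a ⊓ b := by
    refine le_inf ?_ (sub_le_comm.mp h1)
    calc a ⊓ (b + c) - a ⊓ c ≤ a - 0 := sub_le_sub inf_le_left (le_inf ha hc)
      _ = a := sub_zero a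
  exact sub_le_iff_le_add.mp h2

/-- Disjointness is preserved under natural multiples. -/
lemma inf_nsmul_eq_zero' {a b : E} (ha : 0 ≤ a) (hb : 0 ≤ b)
    (hab : a ⊓ b = 0) (n : ℕ) : a ⊓ n • b = 0 := by
  induction n with
  | zero => simpa using inf_eq_right.mpr ha
  | succ n ih =>
    have h0 : 0 ≤ a ⊓ (n + 1) • b := le_inf ha (nsmul_nonneg hb _)
    have h1 : a ⊓ (n + 1) • b ≤ a ⊓ n • b + a ⊓ b := by
      rw [succ_nsmul]
      exact inf_add_le' ha (nsmul_nonneg hb n) hb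
    rw [ih, hab, add_zero] at h1
    exact le_antisymm h1 h0

lemma monotone_of_strict_pos (F : E →ₗ[ℝ] E) (h : ∀ x : E, 0 < x → 0 < F x)
    {x y : E} (hxy : x ≤ y) : F x ≤ F y := by
  rcases eq_or_lt_of_le hxy with rfl | hlt
  · exact le_refl _
  · have h2 : 0 < F (y - x) := h _ (sub_pos.mpr hlt)
    rw [map_sub] at h2
    exact (sub_pos.mp h2).le

/-- Chebyshev's inequality: `λ • F(P_{(|X| ≥ λe)} e) ≤ F(|X|)`. -/
theorem chebyshev_condExp
    (hE : DedekindComplete E) (e : E) (he : IsWeakUnit e)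
    (F : E →ₗ[ℝ] E) (hF : IsCondExp e F)
    (X : E) (l : ℝ) (hl : 0 < l)
    (P : E →ₗ[ℝ] E) (hP : IsProjOnBandGen P ((|X| - l • e) ⊔ 0)) :
    l • F (P e) ≤ F |X| := by
  set a : E := |X| - l • e with ha
  set u : E := a ⊔ 0 with hu
  set w : E := (-a) ⊔ 0 with hw
  have hu0 : (0:E) ≤ u := le_sup_right
  have hw0 : (0:E) ≤ w := le_sup_right
  have hXpos : (0:E) ≤ |X| := abs_nonneg X
  -- P u = u
  have hPu : P u = u := by
    have hlub := hP.2 u hu0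
    refine hlub.unique ?_
    constructor
    · rintro _ ⟨n, rfl⟩; exact inf_le_left
    · intro b hb
      have h1 := hb ⟨1, rfl⟩
      simpa using h1
  -- w ⊓ n • u = 0, hence P w = 0
  have hdisj : w ⊓ u = 0 := by
    have := posPart_inf_negPart_eq_zero (a := a)
    rw [posPart_def, negPart_def] at this
    rw [inf_comm]
    exact this
  have hPw : P w = 0 := by
    have hlub := hP.2 w hw0
    refine hlub.unique ?_
    constructor
    · rintro _ ⟨n, rfl⟩
      exact (inf_nsmul_eq_zero' hw0 hu0 hdisj n).le
    · intro b hb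
      have h1 := hb ⟨0, rfl⟩
      simpa [inf_eq_right.mpr hw0] using h1
  -- a = u - w and hence l • P e ≤ P |X|
  have hauw : a = u - w := by
    have := posPart_sub_negPart (a := a)
    rw [posPart_def, negPart_def] at this
    exact this.symm
  have hPa : P a = u := by rw [hauw, map_sub, hPu, hPw, sub_zero]
  have hkey : l • P e ≤ P |X| := by
    have : P |X| - l • P e = u := by
      rw [← map_smul, ← map_sub, ← ha, hPa]
    have h2 : 0 ≤ P |X| - l • P e := this ▸ hu0
    exact sub_nonneg.mp h2
  have hPX : P |X| ≤ |X| := (hP.1.2 |X| hXpos).2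
  calc l • F (P e) = F (l • P e) := (map_smul F l (P e)).symm
    _ ≤ F (P |X|) := monotone_of_strict_pos F hF.2.1 hkey
    _ ≤ F |X| := monotone_of_strict_pos F hF.2.1 hPX
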